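/- arXiv:2506.10519 — 3 statements merged into one kernel-verified Lean document; each statement's English description precedes it below -/
import Mathlib

section
/- The map μ : T^*M → (𝔤_M → ℝ), sending a covector η_x ∈ T_x^*M to the function (X,f) ↦ η_x(X_x) + f(x), is injective and is a topological embedding of the cotangent bundle T^*M (with its canonical manifold/vector-bundle topology) into the space of all real-valued functions on 𝔤_M equipped with the topology of pointwise convergence (the product topology); this is the weak*-topology case of the statement that μ embeds T^*M into the dual of 𝔤_M. -/
/-!
STATEMENT 3: The map `μ : T^*M → (𝔤_M → ℝ)`, sending a covector `η_x ∈ T_x^*M` to the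
function `(X,f) ↦ η_x(X_x) + f(x)`, is injective and is a topological embedding of the
cotangent bundle `T^*M` (with its canonical vector-bundle topology) into the space of all
real-valued functions on `𝔤_M` with the topology of pointwise convergence (the product
topology); this is the weak*-topology case of the embedding of `T^*M` into `𝔤_M^*`.
-/

open Manifold Bundle Topology

variable (d : ℕ) (M : Type*) [TopologicalSpace M]
  [ChartedSpace (EuclideanSpace ℝ (Fin d)) M]
  [IsManifold (𝓡 d) (⊤ : ℕ∞) M]
  [SigmaCompactSpace M] [ConnectedSpace M] [T2Space M]

/-- An element of `𝔤_M`: a smooth compactly supported vector field on `M` together with a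
smooth compactly supported real-valued function on `M`. -/
structure GMLieElt where
  X : (x : M) → TangentSpace (𝓡 d) x
  f : M → ℝ
  hX : ContMDiff (𝓡 d) (𝓡 d).tangent (⊤ : ℕ∞)
    (fun x => (⟨x, X x⟩ : TangentBundle (𝓡 d) M))
  hXc : ∃ K : Set M, IsCompact K ∧ ∀ x ∉ K, X x = 0
  hf : ContMDiff (𝓡 d) 𝓘(ℝ, ℝ) (⊤ : ℕ∞) f
  hfc : HasCompactSupport f

/-- The cotangent bundle `T^*M`: the total space of the bundle of continuous linear
functionals on the tangent spaces, with its canonical vector-bundle topology. -/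
abbrev CotangentTotal : Type _ :=
  Bundle.TotalSpace (EuclideanSpace ℝ (Fin d) →L[ℝ] ℝ)
    (fun x : M => TangentSpace (𝓡 d) x →SL[RingHom.id ℝ]
      Bundle.Trivial M ℝ x)

/-- The moment map `μ : T^*M → (𝔤_M → ℝ)`, `μ(η_x)(X,f) = η_x(X_x) + f(x)`. -/
noncomputable def momentMap (p : CotangentTotal d M) : GMLieElt d M → ℝ :=
  fun v => p.snd (v.X p.proj) + v.f p.proj

/-!
Pairing a covector at `x` with `(0, χ)` and with `(χ • s, 0)`, for a bump function `χ` and a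
local section `s` that is constant in a trivialization, reads off the base point and the values
of the covector, so `μ` is injective. For the embedding, the weak neighbourhood of `μ(p₀)`
prescribing `χ > 1/2` and the values on the `χ`-weighted frame up to `1` pulls back into the
covectors over the compact set `tsupport χ` with bounded coordinates, a compact set; a continuous
injection into a Hausdorff space with this property is an embedding, since the compact set forces
every cluster point of the pulled-back filter to map to `μ(p₀)`.
-/

open Set Filter

theorem Continuous.isEmbedding_of_exists_isCompact_preimage {X Y : Type*} [TopologicalSpace X]
    [TopologicalSpace Y] [T2Space Y] {f : X → Y} (hf : Continuous f)
    (hinj : Function.Injective f)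
    (h : ∀ x, ∃ W ∈ 𝓝 (f x), ∃ K, IsCompact K ∧ f ⁻¹' W ⊆ K) : IsEmbedding f := by
  refine ⟨isInducing_iff_nhds.2 fun x => le_antisymm (hf.tendsto x).le_comap ?_, hinj⟩
  obtain ⟨W, hW, K, hK, hWK⟩ := h x
  refine hK.le_nhds_of_unique_clusterPt (mem_comap.2 ⟨W, hW, hWK⟩) fun y _ hy => hinj ?_
  exact eq_of_nhds_neBot (hy.map hf.continuousAt tendsto_comap)

section DualBundle

variable {𝕜 B F : Type*} [NontriviallyNormedField 𝕜] [NormedAddCommGroup F]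
  [NormedSpace 𝕜 F] [TopologicalSpace B] {V : B → Type*} [TopologicalSpace (TotalSpace F V)]
  [∀ x, AddCommGroup (V x)] [∀ x, Module 𝕜 (V x)] [∀ x, TopologicalSpace (V x)]
  [FiberBundle F V] [VectorBundle 𝕜 F V]

theorem continuous_dual_apply_section {s : ∀ x, V x}
    (hs : Continuous fun x => TotalSpace.mk' F x (s x)) :
    Continuous fun p : TotalSpace (F →L[𝕜] 𝕜) (fun x => V x →L[𝕜] Trivial B 𝕜 x) =>
      p.snd (s p.proj) := by
  have := Continuous.clm_bundle_apply (F₂ := 𝕜) (E₂ := Trivial B 𝕜)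
    (M := TotalSpace (F →L[𝕜] 𝕜) (fun x => V x →L[𝕜] Trivial B 𝕜 x))
    (b := TotalSpace.proj) (ϕ := fun p => p.snd) continuous_id
    (hs.comp (FiberBundle.continuous_proj _ _))
  exact continuous_snd.comp ((Trivial.homeomorphProd B 𝕜).continuous.comp this)

theorem trivializationAt_dual_apply (x₀ : B)
    (p : TotalSpace (F →L[𝕜] 𝕜) (fun x => V x →L[𝕜] Trivial B 𝕜 x))
    (hp : p.proj ∈ (trivializationAt F V x₀).baseSet) (w : F) :
    (trivializationAt (F →L[𝕜] 𝕜) (fun x => V x →L[𝕜] Trivial B 𝕜 x) x₀ p).2 w =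
      p.snd ((trivializationAt F V x₀).symm p.proj w) := by
  simp [hom_trivializationAt_apply, ContinuousLinearMap.inCoordinates,
    Trivialization.symmL_apply, hp]

theorem isCompact_setOf_norm_apply_basis_le [ProperSpace 𝕜] {ι : Type*} [Finite ι]
    (b : Module.Basis ι 𝕜 F) (R : ι → ℝ) :
    IsCompact {L : F →L[𝕜] 𝕜 | ∀ i, ‖L (b i)‖ ≤ R i} := by
  have : FiniteDimensional 𝕜 F := b.finiteDimensional_of_finite
  let Φ : (F →L[𝕜] 𝕜) ≃L[𝕜] (ι → 𝕜) :=
    (LinearMap.toContinuousLinearMap.symm ≪≫ₗ (b.constr 𝕜).symm).toContinuousLinearEquiv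
  have hΦ : {L : F →L[𝕜] 𝕜 | ∀ i, ‖L (b i)‖ ≤ R i} =
      Φ ⁻¹' univ.pi fun i => Metric.closedBall 0 (R i) := by
    ext L
    simp [Φ]
  rw [hΦ]
  exact Φ.toHomeomorph.isCompact_preimage.2
    (isCompact_univ_pi fun i => isCompact_closedBall _ _)

theorem isCompact_setOf_proj_mem_norm_apply_basis_le [ProperSpace 𝕜] {ι : Type*} [Finite ι]
    (b : Module.Basis ι 𝕜 F) (R : ι → ℝ) (x₀ : B) {K : Set B} (hK : IsCompact K)
    (hKe : K ⊆ (trivializationAt F V x₀).baseSet) :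
    IsCompact {p : TotalSpace (F →L[𝕜] 𝕜) (fun x => V x →L[𝕜] Trivial B 𝕜 x) |
      p.proj ∈ K ∧
        ∀ i, ‖p.snd ((trivializationAt F V x₀).symm p.proj (b i))‖ ≤ R i} := by
  set eH := trivializationAt (F →L[𝕜] 𝕜) (fun x => V x →L[𝕜] Trivial B 𝕜 x) x₀
  set D := {L : F →L[𝕜] 𝕜 | ∀ i, ‖L (b i)‖ ≤ R i}
  have hsub : K ×ˢ D ⊆ eH.target := by
    simpa [eH, hom_trivializationAt_target] using prod_mono hKe (subset_univ D)
  convert (hK.prod (isCompact_setOf_norm_apply_basis_le b R)).image_of_continuousOn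
    (eH.toOpenPartialHomeomorph.continuousOn_symm.mono hsub)
  rw [eH.toOpenPartialHomeomorph.symm_image_eq_source_inter_preimage hsub]
  ext p
  simp only [eH, mem_ofPred_eq, mem_inter_iff, mem_preimage, hom_trivializationAt_source,
    mem_prod, D]
  constructor
  · rintro ⟨hp, hR⟩
    refine ⟨⟨hKe hp, mem_univ _⟩, hp, fun i => ?_⟩
    exact (congrArg norm (trivializationAt_dual_apply x₀ p (hKe hp) (b i))).trans_le (hR i)
  · rintro ⟨⟨hpe, -⟩, hp, hR⟩
    refine ⟨hp, fun i => ?_⟩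
    exact (congrArg norm (trivializationAt_dual_apply x₀ p hpe (b i))).symm.trans_le (hR i)

end DualBundle

namespace GMLieElt

variable {n : ℕ} {N : Type*} [TopologicalSpace N] [ChartedSpace (EuclideanSpace ℝ (Fin n)) N]
  [IsManifold (𝓡 n) (⊤ : ℕ∞) N] [T2Space N] {c : N}

noncomputable def ofBump (χ : SmoothBumpFunction (𝓡 n) c) : GMLieElt n N where
  X := 0
  f := χ
  hX := contMDiff_zeroSection ℝ (TangentSpace (𝓡 n))
  hXc := ⟨∅, isCompact_empty, fun _ _ => rfl⟩
  hf := χ.contMDiff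
  hfc := χ.hasCompactSupport

noncomputable def ofBumpVector (χ : SmoothBumpFunction (𝓡 n) c)
    (w : EuclideanSpace ℝ (Fin n)) : GMLieElt n N where
  X := (χ : N → ℝ) • fun y =>
    (trivializationAt (EuclideanSpace ℝ (Fin n)) (TangentSpace (𝓡 n)) c).symm y w
  f := 0
  hX := by
    set e := trivializationAt (EuclideanSpace ℝ (Fin n)) (TangentSpace (𝓡 n)) c
    refine χ.contMDiff.contMDiffOn.smul_section_of_tsupport e.open_baseSet ?_ ?_
    · simpa [e] using χ.tsupport_subset_chartAt_source
    · exact e.contMDiffOn_section_baseSet_iff.2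
        ((contMDiffOn_const (c := w)).congr fun y hy => by simp [e.apply_mk_symm hy])
  hXc := ⟨tsupport χ, χ.hasCompactSupport, fun y hy => by
    simp [image_eq_zero_of_notMem_tsupport hy]⟩
  hf := contMDiff_const
  hfc := HasCompactSupport.zero

theorem momentMap_ofBump (p : CotangentTotal n N) (χ : SmoothBumpFunction (𝓡 n) c) :
    momentMap n N p (ofBump χ) = χ p.proj := by
  simp [momentMap, ofBump]

theorem momentMap_ofBumpVector (p : CotangentTotal n N)
    (χ : SmoothBumpFunction (𝓡 n) c) (w : EuclideanSpace ℝ (Fin n)) :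
    momentMap n N p (ofBumpVector χ w) =
      χ p.proj *
        p.snd ((trivializationAt (EuclideanSpace ℝ (Fin n)) (TangentSpace (𝓡 n)) c).symm
          p.proj w) := by
  simp [momentMap, ofBumpVector]

end GMLieElt

section MomentMap

open GMLieElt

variable {n : ℕ} {N : Type*} [TopologicalSpace N] [ChartedSpace (EuclideanSpace ℝ (Fin n)) N]
  [IsManifold (𝓡 n) (⊤ : ℕ∞) N]

theorem momentMap_injective [T2Space N] : Function.Injective (momentMap n N) := by
  rintro ⟨x, ξ⟩ ⟨y, ζ⟩ h
  obtain rfl : x = y := by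
    by_contra hxy
    obtain ⟨χ, -, hχ⟩ := (SmoothBumpFunction.nhds_basis_tsupport (I := 𝓡 n) x).mem_iff.1
      (isOpen_compl_singleton.mem_nhds hxy)
    have := congrFun h (ofBump χ)
    simp [momentMap_ofBump, image_eq_zero_of_notMem_tsupport fun hy => hχ hy rfl] at this
  obtain ⟨χ⟩ : Nonempty (SmoothBumpFunction (𝓡 n) x) := inferInstance
  congr 1
  ext v
  have hx := FiberBundle.mem_baseSet_trivializationAt' (F := EuclideanSpace ℝ (Fin n))
    (E := TangentSpace (𝓡 n)) x
  have := congrFun h (ofBumpVector χ (trivializationAt _ (TangentSpace (𝓡 n)) x ⟨x, v⟩).2)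
  simpa [momentMap_ofBumpVector, χ.eq_one, Trivialization.symm_apply_apply_mk _ hx] using this

theorem continuous_momentMap : Continuous (momentMap n N) :=
  continuous_pi fun v => (continuous_dual_apply_section v.hX.continuous).add
    (v.hf.continuous.comp (FiberBundle.continuous_proj _ _))

theorem exists_isCompact_preimage_momentMap [T2Space N] (p₀ : CotangentTotal n N) :
    ∃ W ∈ 𝓝 (momentMap n N p₀), ∃ K, IsCompact K ∧ momentMap n N ⁻¹' W ⊆ K := by
  obtain ⟨χ⟩ : Nonempty (SmoothBumpFunction (𝓡 n) p₀.proj) := inferInstance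
  set b := (EuclideanSpace.basisFun (Fin n) ℝ).toBasis
  set c : Fin n → ℝ := fun i => momentMap n N p₀ (ofBumpVector χ (b i))
  have hχ : ∀ᶠ g in 𝓝 (momentMap n N p₀), 2⁻¹ < g (ofBump χ) :=
    ((continuous_apply _).tendsto _).eventually (lt_mem_nhds (by norm_num [momentMap_ofBump]))
  have hc :
      ∀ᶠ g in 𝓝 (momentMap n N p₀), ∀ i, dist (g (ofBumpVector χ (b i))) (c i) < 1 :=
    eventually_all.2 fun i =>
      ((continuous_apply (ofBumpVector χ (b i))).tendsto (momentMap n N p₀)).eventually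
        (Metric.ball_mem_nhds (c i) one_pos)
  refine ⟨_, hχ.and hc, _, isCompact_setOf_proj_mem_norm_apply_basis_le b
    (fun i => 2 * (‖c i‖ + 1)) p₀.proj χ.hasCompactSupport.isCompact
    (by simpa using χ.tsupport_subset_chartAt_source), ?_⟩
  rintro p ⟨hχp, hcp⟩
  rw [momentMap_ofBump] at hχp
  refine ⟨subset_tsupport _ ((inv_pos.2 two_pos).trans hχp).ne', fun i => ?_⟩
  set a := p.snd ((trivializationAt _ (TangentSpace (𝓡 n)) p₀.proj).symm p.proj (b i))
  have ha : χ p.proj * ‖a‖ ≤ ‖c i‖ + 1 := by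
    have := norm_le_norm_add_const_of_dist_le (hcp i).le
    rwa [momentMap_ofBumpVector, norm_mul, Real.norm_of_nonneg χ.nonneg] at this
  nlinarith [norm_nonneg a]

end MomentMap

/-- **The moment map is a topological embedding of `T^*M` into `𝔤_M^*` with the
weak*-topology** : `μ` is injective, and it is a topological embedding of `T^*M` into the
space of real-valued functions on `𝔤_M` with the topology of pointwise convergence. -/
theorem momentMap_injective_isEmbedding :
    Function.Injective (momentMap d M) ∧ Topology.IsEmbedding (momentMap d M) :=
  ⟨momentMap_injective, continuous_momentMap.isEmbedding_of_exists_isCompact_preimage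
    momentMap_injective exists_isCompact_preimage_momentMap⟩
end

section
/- Define, for (φ,f) ∈ 𝒢_M and (X,g) ∈ 𝔤_M, Ad_{(φ,f)}(X,g) := (φ_*X, g∘φ⁻¹ + (X(f∘φ))∘φ⁻¹), where (φ_*X)_y := T_{φ⁻¹(y)}φ (X_{φ⁻¹(y)}) is the pushforward vector field. Then: (i) Ad_{(id_M,0)} is the identity and Ad_{(φ,f)(θ,g)} = Ad_{(φ,f)} ∘ Ad_{(θ,g)} for all (φ,f),(θ,g) ∈ 𝒢_M, so Ad is a left action of 𝒢_M on 𝔤_M; and (ii) each Ad_{(φ,f)} is a Lie algebra automorphism of 𝔤_M: Ad_{(φ,f)}[(X,g₁),(Y,g₂)] = [Ad_{(φ,f)}(X,g₁), Ad_{(φ,f)}(Y,g₂)] for all (X,g₁),(Y,g₂) ∈ 𝔤_M. -/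
/-!
STATEMENT 10: The adjoint action of `𝒢_M` on `𝔤_M`,
`Ad_{(φ,f)}(X,g) := (φ_*X, g∘φ⁻¹ + (X(f∘φ))∘φ⁻¹)`, is a left action of `𝒢_M` on `𝔤_M`
(`Ad_{(id,0)} = id` and `Ad_{(φ,f)(θ,g)} = Ad_{(φ,f)} ∘ Ad_{(θ,g)}`), and each
`Ad_{(φ,f)}` is a Lie algebra automorphism of `𝔤_M` for the bracket
`[(X,f),(Y,g)] = (−⁅X,Y⁆, −Xg+Yf)`.

Smooth vector fields are formalized as derivations of the algebra of smooth functions;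
the pushforward `φ_*X` acts on a smooth function `g` by `(φ_*X)g = (X(g∘φ))∘φ⁻¹`.
-/

open Manifold Topology ContDiff

variable (d : ℕ) (M : Type*) [TopologicalSpace M]
  [ChartedSpace (EuclideanSpace ℝ (Fin d)) M]
  [IsManifold (𝓡 d) ((⊤ : ℕ∞) : WithTop ℕ∞) M]
  [SigmaCompactSpace M] [ConnectedSpace M] [T2Space M]

/-- Smooth vector fields on `M`, as derivations of the algebra of smooth functions. -/
abbrev SmoothVF : Type _ :=
  Derivation ℝ C^(⊤ : ℕ∞)⟮𝓡 d, M; ℝ⟯ C^(⊤ : ℕ∞)⟮𝓡 d, M; ℝ⟯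

variable {d M}

/-- A vector field has compact support if it vanishes outside a compact set. -/
def VFCompactSupport (X : SmoothVF d M) : Prop :=
  ∃ K : Set M, IsCompact K ∧ ∀ x ∉ K, Derivation.evalAt x X = 0

/-- The underlying vector space of `𝔤_M`. -/
abbrev GMAlg (d : ℕ) (M : Type*) [TopologicalSpace M]
    [ChartedSpace (EuclideanSpace ℝ (Fin d)) M]
    [IsManifold (𝓡 d) ((⊤ : ℕ∞) : WithTop ℕ∞) M] : Type _ :=
  SmoothVF d M × C^(⊤ : ℕ∞)⟮𝓡 d, M; ℝ⟯

/-- The bracket `[(X,f),(Y,g)] := (−⁅X,Y⁆, −Xg + Yf)` of `𝔤_M`. -/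
noncomputable def gmBracket (p q : GMAlg d M) : GMAlg d M :=
  (-⁅p.1, q.1⁆, -(p.1 q.2) + q.1 p.2)

/-- A diffeomorphism of `M` as a smooth map. -/
noncomputable def toSmoothMap (φ : M ≃ₘ⟮𝓡 d, 𝓡 d⟯ M) : C^(⊤ : ℕ∞)⟮𝓡 d, M; 𝓡 d, M⟯ :=
  ⟨⇑φ, φ.contMDiff⟩

/-- Precomposition with a diffeomorphism, as a linear map on smooth functions. -/
noncomputable def compByDiffeo (φ : M ≃ₘ⟮𝓡 d, 𝓡 d⟯ M) :
    C^(⊤ : ℕ∞)⟮𝓡 d, M; ℝ⟯ →ₗ[ℝ] C^(⊤ : ℕ∞)⟮𝓡 d, M; ℝ⟯ where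
  toFun g := g.comp (toSmoothMap φ)
  map_add' g₁ g₂ := by ext y; rfl
  map_smul' c g := by ext y; rfl

/-- The pushforward vector field `φ_*X`: as a derivation, `(φ_*X)g := (X(g∘φ))∘φ⁻¹`. -/
noncomputable def pushVF (φ : M ≃ₘ⟮𝓡 d, 𝓡 d⟯ M) (X : SmoothVF d M) : SmoothVF d M where
  toLinearMap := (compByDiffeo φ.symm) ∘ₗ (X.toLinearMap ∘ₗ compByDiffeo φ)
  map_one_eq_zero' := by
    ext y
    show (X ((1 : C^(⊤ : ℕ∞)⟮𝓡 d, M; ℝ⟯).comp (toSmoothMap φ))) (φ.symm y) = _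
    rw [show ((1 : C^(⊤ : ℕ∞)⟮𝓡 d, M; ℝ⟯).comp (toSmoothMap φ)) = 1 from rfl,
      Derivation.map_one_eq_zero]
    rfl
  leibniz' := by
    intro a b
    ext y
    show (X ((a * b).comp (toSmoothMap φ))) (φ.symm y) = _
    have h1 : (a * b).comp (toSmoothMap φ)
        = a.comp (toSmoothMap φ) * b.comp (toSmoothMap φ) := rfl
    rw [h1, Derivation.leibniz]
    show a (φ (φ.symm y)) * (X (b.comp (toSmoothMap φ))) (φ.symm y)
        + b (φ (φ.symm y)) * (X (a.comp (toSmoothMap φ))) (φ.symm y) = _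
    rw [φ.apply_symm_apply]
    rfl

/-- The adjoint action `Ad_{(φ,f)}(X,g) := (φ_*X, g∘φ⁻¹ + (X(f∘φ))∘φ⁻¹)` of `𝒢_M`
on `𝔤_M`. -/
noncomputable def AdG (φ : M ≃ₘ⟮𝓡 d, 𝓡 d⟯ M) (f : C^(⊤ : ℕ∞)⟮𝓡 d, M; ℝ⟯) (p : GMAlg d M) :
    GMAlg d M :=
  (pushVF φ p.1,
    p.2.comp (toSmoothMap φ.symm)
      + (p.1 (f.comp (toSmoothMap φ))).comp (toSmoothMap φ.symm))

/-! Everything rests on `(φ_*X)(h ∘ φ⁻¹) = (X h) ∘ φ⁻¹`. For the bracket, the composition law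
factors `Ad_{(φ,f)} = Ad_{(φ,0)} ∘ Ad_{(id, f∘φ)}`: the first factor is the pushforward, which
preserves Lie brackets of vector fields, and `Ad_{(id,F)}(X,g) = (X, g + XF)` preserves the bracket
because `⁅X,Y⁆F = X(YF) - Y(XF)`. Compact support is preserved since `X h` vanishes wherever `X`
does. -/

section PushForward

omit [IsManifold (𝓡 d) ((⊤ : ℕ∞) : WithTop ℕ∞) M] [SigmaCompactSpace M] [ConnectedSpace M] [T2Space M]

variable (φ θ : M ≃ₘ⟮𝓡 d, 𝓡 d⟯ M)

@[simp]
lemma toSmoothMap_apply (x : M) : toSmoothMap φ x = φ x := rfl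

lemma comp_toSmoothMap_symm_comp (h : C^(⊤ : ℕ∞)⟮𝓡 d, M; ℝ⟯) :
    (h.comp (toSmoothMap φ.symm)).comp (toSmoothMap φ) = h := by
  ext x
  simp

lemma comp_toSmoothMap_comp_symm (h : C^(⊤ : ℕ∞)⟮𝓡 d, M; ℝ⟯) :
    (h.comp (toSmoothMap φ)).comp (toSmoothMap φ.symm) = h := by
  ext x
  simp

@[simp]
lemma zero_comp_toSmoothMap :
    (0 : C^(⊤ : ℕ∞)⟮𝓡 d, M; ℝ⟯).comp (toSmoothMap φ) = 0 := rfl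

lemma comp_toSmoothMap_trans (h : C^(⊤ : ℕ∞)⟮𝓡 d, M; ℝ⟯) :
    h.comp (toSmoothMap (θ.trans φ)) = (h.comp (toSmoothMap φ)).comp (toSmoothMap θ) := rfl

lemma pushVF_apply (X : SmoothVF d M) (h : C^(⊤ : ℕ∞)⟮𝓡 d, M; ℝ⟯) :
    pushVF φ X h = (X (h.comp (toSmoothMap φ))).comp (toSmoothMap φ.symm) := rfl

lemma pushVF_apply_comp_symm (X : SmoothVF d M) (h : C^(⊤ : ℕ∞)⟮𝓡 d, M; ℝ⟯) :
    pushVF φ X (h.comp (toSmoothMap φ.symm)) = (X h).comp (toSmoothMap φ.symm) := by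
  rw [pushVF_apply, comp_toSmoothMap_symm_comp]

lemma pushVF_trans (X : SmoothVF d M) : pushVF (θ.trans φ) X = pushVF φ (pushVF θ X) := rfl

lemma pushVF_add_smul (c : ℝ) (X Y : SmoothVF d M) :
    pushVF φ (c • X + Y) = c • pushVF φ X + pushVF φ Y := rfl

lemma pushVF_lie (X Y : SmoothVF d M) : pushVF φ ⁅X, Y⁆ = ⁅pushVF φ X, pushVF φ Y⁆ := by
  ext h : 1
  simp only [Derivation.commutator_apply, pushVF_apply φ _ h, pushVF_apply_comp_symm]
  rfl

lemma VFCompactSupport.pushVF {X : SmoothVF d M} (hX : VFCompactSupport X) :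
    VFCompactSupport (pushVF φ X) := by
  obtain ⟨K, hK, hXK⟩ := hX
  refine ⟨φ '' K, hK.image φ.continuous, fun y hy => ?_⟩
  have hy' : φ.symm y ∉ K := fun h => hy ⟨φ.symm y, h, φ.apply_symm_apply y⟩
  ext h
  exact DFunLike.congr_fun (hXK _ hy') (h.comp (toSmoothMap φ))

end PushForward

section Adjoint

omit [SigmaCompactSpace M] [ConnectedSpace M] [T2Space M]

variable (φ θ : M ≃ₘ⟮𝓡 d, 𝓡 d⟯ M) (f g : C^(⊤ : ℕ∞)⟮𝓡 d, M; ℝ⟯)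

lemma AdG_refl (p : GMAlg d M) :
    AdG (Diffeomorph.refl (𝓡 d) M (⊤ : ℕ∞)) f p = (p.1, p.2 + p.1 f) := rfl

lemma AdG_refl_zero (p : GMAlg d M) :
    AdG (Diffeomorph.refl (𝓡 d) M (⊤ : ℕ∞)) (0 : C^(⊤ : ℕ∞)⟮𝓡 d, M; ℝ⟯) p = p := by
  rw [AdG_refl, map_zero, add_zero]

lemma AdG_zero (p : GMAlg d M) :
    AdG φ 0 p = (pushVF φ p.1, p.2.comp (toSmoothMap φ.symm)) := by
  ext <;> simp [AdG]

lemma AdG_trans (p : GMAlg d M) :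
    AdG (θ.trans φ) (g.comp (toSmoothMap φ.symm) + f) p = AdG φ f (AdG θ g p) := by
  ext : 1
  · exact pushVF_trans φ θ p.1
  · simp only [AdG, ContMDiffMap.add_comp, comp_toSmoothMap_trans, comp_toSmoothMap_symm_comp,
      map_add, add_assoc]
    rfl

lemma AdG_add_smul (c : ℝ) (p q : GMAlg d M) :
    AdG φ f (c • p + q) = c • AdG φ f p + AdG φ f q := by
  ext : 1
  · exact pushVF_add_smul φ c p.1 q.1
  · simp only [AdG, Prod.fst_add, Prod.snd_add, Prod.smul_fst, Prod.smul_snd,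
      Derivation.add_apply, Derivation.smul_apply, ContMDiffMap.add_comp, ContMDiffMap.smul_comp]
    module

lemma AdG_eq_AdG_zero_AdG_refl (p : GMAlg d M) :
    AdG φ f p = AdG φ 0 (AdG (Diffeomorph.refl (𝓡 d) M (⊤ : ℕ∞)) (f.comp (toSmoothMap φ)) p) := by
  rw [← AdG_trans, Diffeomorph.refl_trans, comp_toSmoothMap_comp_symm, add_zero]

lemma AdG_zero_gmBracket (p q : GMAlg d M) :
    AdG φ 0 (gmBracket p q) = gmBracket (AdG φ 0 p) (AdG φ 0 q) := by
  simp only [AdG_zero, gmBracket, pushVF_apply_comp_symm]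
  ext : 1
  · rw [← pushVF_lie]
    rfl
  · rfl

lemma AdG_refl_gmBracket (p q : GMAlg d M) :
    AdG (Diffeomorph.refl (𝓡 d) M (⊤ : ℕ∞)) f (gmBracket p q) =
      gmBracket (AdG (Diffeomorph.refl (𝓡 d) M (⊤ : ℕ∞)) f p)
        (AdG (Diffeomorph.refl (𝓡 d) M (⊤ : ℕ∞)) f q) := by
  simp only [AdG_refl, gmBracket, map_add, Derivation.neg_apply, Derivation.commutator_apply]
  congr 1
  abel

lemma AdG_gmBracket (p q : GMAlg d M) :
    AdG φ f (gmBracket p q) = gmBracket (AdG φ f p) (AdG φ f q) := by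
  simp only [AdG_eq_AdG_zero_AdG_refl φ f, AdG_refl_gmBracket, AdG_zero_gmBracket]

end Adjoint

section CompactSupport

omit [SigmaCompactSpace M] [ConnectedSpace M]

omit [IsManifold (𝓡 d) ((⊤ : ℕ∞) : WithTop ℕ∞) M] in
lemma VFCompactSupport.hasCompactSupport_apply {X : SmoothVF d M} (hX : VFCompactSupport X)
    (h : C^(⊤ : ℕ∞)⟮𝓡 d, M; ℝ⟯) : HasCompactSupport ⇑(X h) := by
  obtain ⟨K, hK, hXK⟩ := hX
  exact HasCompactSupport.intro hK fun x hx => DFunLike.congr_fun (hXK x hx) h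

lemma hasCompactSupport_AdG_snd (φ : M ≃ₘ⟮𝓡 d, 𝓡 d⟯ M) (f : C^(⊤ : ℕ∞)⟮𝓡 d, M; ℝ⟯)
    {p : GMAlg d M} (hX : VFCompactSupport p.1) (hp : HasCompactSupport ⇑p.2) :
    HasCompactSupport ⇑(AdG φ f p).2 :=
  (hp.comp_homeomorph φ.symm.toHomeomorph).add
    ((hX.hasCompactSupport_apply _).comp_homeomorph φ.symm.toHomeomorph)

end CompactSupport

theorem AdG_action_and_lie_automorphism_general
    (φ θ : M ≃ₘ⟮𝓡 d, 𝓡 d⟯ M)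
    (f g : C^(⊤ : ℕ∞)⟮𝓡 d, M; ℝ⟯) :
    -- (i) `Ad_{(id_M, 0)}` is the identity ...
    (∀ p : GMAlg d M, VFCompactSupport p.1 → HasCompactSupport ⇑p.2 →
      AdG (Diffeomorph.refl (𝓡 d) M (⊤ : ℕ∞)) (0 : C^(⊤ : ℕ∞)⟮𝓡 d, M; ℝ⟯) p = p) ∧
    -- ... and `Ad_{(φ∘θ, g∘φ⁻¹+f)} = Ad_{(φ,f)} ∘ Ad_{(θ,g)}`
    (∀ p : GMAlg d M, VFCompactSupport p.1 → HasCompactSupport ⇑p.2 →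
      AdG (θ.trans φ) (g.comp (toSmoothMap φ.symm) + f) p = AdG φ f (AdG θ g p)) ∧
    -- `Ad_{(φ,f)}` maps `𝔤_M` to `𝔤_M`
    (∀ p : GMAlg d M, VFCompactSupport p.1 → HasCompactSupport ⇑p.2 →
      VFCompactSupport (AdG φ f p).1 ∧ HasCompactSupport ⇑(AdG φ f p).2) ∧
    -- (ii) `Ad_{(φ,f)}` is linear ...
    (∀ (c : ℝ) (p q : GMAlg d M), AdG φ f (c • p + q) = c • AdG φ f p + AdG φ f q) ∧
    -- ... and preserves the bracket of `𝔤_M`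
    (∀ p q : GMAlg d M, VFCompactSupport p.1 → HasCompactSupport ⇑p.2 →
      VFCompactSupport q.1 → HasCompactSupport ⇑q.2 →
      AdG φ f (gmBracket p q) = gmBracket (AdG φ f p) (AdG φ f q)) :=
  ⟨fun p _ _ => AdG_refl_zero p,
    fun p _ _ => AdG_trans φ θ f g p,
    fun _ hX hp => ⟨hX.pushVF φ, hasCompactSupport_AdG_snd φ f hX hp⟩,
    AdG_add_smul φ f,
    fun p q _ _ _ _ => AdG_gmBracket φ f p q⟩

/-- **`Ad` is a left action of `𝒢_M` on `𝔤_M` by Lie algebra automorphisms** :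
(i) `Ad_{(id,0)} = id` and `Ad_{(φ,f)(θ,g)} = Ad_{(φ,f)} ∘ Ad_{(θ,g)}` (the product in
`𝒢_M` being `(φ,f)(θ,g) = (φ∘θ, g∘φ⁻¹+f)`); moreover `Ad_{(φ,f)}` preserves `𝔤_M`;
(ii) each `Ad_{(φ,f)}` is linear and preserves the bracket of `𝔤_M`. -/
theorem AdG_action_and_lie_automorphism
    (φ θ : M ≃ₘ⟮𝓡 d, 𝓡 d⟯ M)
    (hφ : ∃ K : Set M, IsCompact K ∧ ∀ x ∉ K, φ x = x)
    (hθ : ∃ K : Set M, IsCompact K ∧ ∀ x ∉ K, θ x = x)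
    (f g : C^(⊤ : ℕ∞)⟮𝓡 d, M; ℝ⟯)
    (hf : HasCompactSupport ⇑f) (hg : HasCompactSupport ⇑g) :
    -- (i) `Ad_{(id_M, 0)}` is the identity ...
    (∀ p : GMAlg d M, VFCompactSupport p.1 → HasCompactSupport ⇑p.2 →
      AdG (Diffeomorph.refl (𝓡 d) M (⊤ : ℕ∞)) (0 : C^(⊤ : ℕ∞)⟮𝓡 d, M; ℝ⟯) p = p) ∧
    -- ... and `Ad_{(φ∘θ, g∘φ⁻¹+f)} = Ad_{(φ,f)} ∘ Ad_{(θ,g)}`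
    (∀ p : GMAlg d M, VFCompactSupport p.1 → HasCompactSupport ⇑p.2 →
      AdG (θ.trans φ) (g.comp (toSmoothMap φ.symm) + f) p = AdG φ f (AdG θ g p)) ∧
    -- `Ad_{(φ,f)}` maps `𝔤_M` to `𝔤_M`
    (∀ p : GMAlg d M, VFCompactSupport p.1 → HasCompactSupport ⇑p.2 →
      VFCompactSupport (AdG φ f p).1 ∧ HasCompactSupport ⇑(AdG φ f p).2) ∧
    -- (ii) `Ad_{(φ,f)}` is linear ...
    (∀ (c : ℝ) (p q : GMAlg d M), AdG φ f (c • p + q) = c • AdG φ f p + AdG φ f q) ∧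
    -- ... and preserves the bracket of `𝔤_M`
    (∀ p q : GMAlg d M, VFCompactSupport p.1 → HasCompactSupport ⇑p.2 →
      VFCompactSupport q.1 → HasCompactSupport ⇑q.2 →
      AdG φ f (gmBracket p q) = gmBracket (AdG φ f p) (AdG φ f q)) :=
  AdG_action_and_lie_automorphism_general φ θ f g
end

section
/- Let K : M × M → ℂ be measurable with ∫∫ |K(x,y)|² dμ(x)dμ(y) < ∞, and let T_K be the associated integral operator, (T_Kψ)(x) := ∫_M K(x,y)ψ(y) dμ(y) for ψ ∈ L²(M,μ). Then for every (φ,f) ∈ 𝒢_M, h ∈ (0,1], and ψ ∈ L²(M,μ), the conjugated operator satisfies ρ^h_{(φ,f)} T_K (ρ^h_{(φ,f)})⁻¹ ψ = T_{K'} ψ in L²(M,μ), where K'(x,y) := e^{−2πi(f(x)−f(y))/h} · D(x)^{1/2} D(y)^{1/2} · K(φ⁻¹(x), φ⁻¹(y)) and D := d(φ_*μ)/dμ. -/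
/-!
STATEMENT 11: Let `K : M × M → ℂ` be measurable and square integrable for `μ ⊗ μ`, with
associated integral operator `(T_Kψ)(x) = ∫ K(x,y)ψ(y) dμ(y)`. Then for every
`(φ,f) ∈ 𝒢_M`, `h ∈ (0,1]` and `ψ ∈ L²(M,μ)`,
`ρ^h_{(φ,f)} T_K (ρ^h_{(φ,f)})⁻¹ ψ = T_{K'} ψ` in `L²(M,μ)`, where
`K'(x,y) = e^{−2πi(f(x)−f(y))/h} D(x)^{1/2} D(y)^{1/2} K(φ⁻¹(x),φ⁻¹(y))`,
`D = d(φ_*μ)/dμ`, and `(ρ^h_{(φ,f)})⁻¹ = ρ^h_{(φ⁻¹, −f∘φ)}`.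
-/

open Manifold MeasureTheory Topology
open scoped ContDiff

variable {d : ℕ} {M : Type*} [TopologicalSpace M]
  [ChartedSpace (EuclideanSpace ℝ (Fin d)) M]
  [IsManifold (𝓡 d) (⊤ : ℕ∞) M]
  [SigmaCompactSpace M] [ConnectedSpace M] [T2Space M]
  [MeasurableSpace M] [BorelSpace M]

/-- The operator `ρ^h_{(φ,f)}` on functions:
`(ρ^h_{(φ,f)}ψ)(x) = e^{−2πi f(x)/h} ((d(φ_*μ)/dμ)(x))^{1/2} ψ(φ⁻¹(x))`. -/
noncomputable def rho (h : ℝ) (φ : M ≃ₘ⟮𝓡 d, 𝓡 d⟯ M) (f : M → ℝ) (μ : Measure M)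
    (ψ : M → ℂ) : M → ℂ := fun x =>
  Complex.exp (((-2 * Real.pi * f x / h : ℝ) : ℂ) * Complex.I) *
    ((Real.sqrt (((μ.map ⇑φ).rnDeriv μ) x).toReal : ℝ) : ℂ) * ψ (φ.symm x)

/-- The integral operator `T_K` with kernel `K`: `(T_Kψ)(x) = ∫ K(x,y)ψ(y) dμ(y)`. -/
noncomputable def intOp (μ : Measure M) (K : M → M → ℂ) (ψ : M → ℂ) : M → ℂ :=
  fun x => ∫ y, K x y * ψ y ∂μ

/-!
Let `D = d(φ_*μ)/dμ`. As `φ_*μ` and `μ` are mutually absolutely continuous, the Radon–Nikodym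
derivative of `φ⁻¹_*μ` is `D⁻¹ ∘ φ`. The change of variables `y = φ⁻¹ z` in the inner integral of
`ρ T_K ρ⁻¹ ψ` brings in the density `D(z)`, so the half-density factor becomes
`D(z) · D(z)^{-1/2} = D(z)^{1/2}`, and the two phases combine to `e^{−2πi(f(x)−f(z))/h}`.
-/

open scoped ENNReal

-- Also true at `0` and `∞`, where `toReal` makes both sides vanish.
theorem ENNReal.toReal_mul_sqrt_toReal_inv (t : ℝ≥0∞) :
    t.toReal * √(t⁻¹.toReal) = √t.toReal := by
  rcases eq_or_ne t 0 with rfl | h0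
  · simp
  rcases eq_or_ne t ⊤ with rfl | htop
  · simp
  have ht : 0 < t.toReal := ENNReal.toReal_pos h0 htop
  have hs : √t.toReal ≠ 0 := (Real.sqrt_pos.2 ht).ne'
  rw [ENNReal.toReal_inv, Real.sqrt_inv]
  field_simp
  exact (Real.sq_sqrt ht.le).symm

namespace MeasureTheory.Measure

variable {α : Type*} [MeasurableSpace α] {μ : Measure α} [SigmaFinite μ] (e : α ≃ᵐ α)

theorem rnDeriv_map_symm_comp_symm (h : μ ≪ μ.map e) :
    (fun x ↦ (μ.map e.symm).rnDeriv μ (e.symm x)) =ᵐ[μ] ((μ.map e).rnDeriv μ)⁻¹ := by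
  have := e.measurableEmbedding.sigmaFinite_map (μ := μ)
  have hmap := e.symm.measurableEmbedding.rnDeriv_map μ (μ.map e)
  rw [MeasurableEquiv.map_symm_map] at hmap
  filter_upwards [h.ae_le hmap, inv_rnDeriv' h] with x hx hinv
  rw [hx, ← hinv]

theorem integral_sqrt_rnDeriv_map_symm_smul {E : Type*} [NormedAddCommGroup E] [NormedSpace ℝ E]
    (hac : μ.map e ≪ μ) (hca : μ ≪ μ.map e) (g : α → E) :
    ∫ y, √((μ.map e.symm).rnDeriv μ y).toReal • g y ∂μ
      = ∫ z, √((μ.map e).rnDeriv μ z).toReal • g (e.symm z) ∂μ := by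
  have := e.measurableEmbedding.sigmaFinite_map (μ := μ)
  calc ∫ y, √((μ.map e.symm).rnDeriv μ y).toReal • g y ∂μ
      = ∫ z, √((μ.map e.symm).rnDeriv μ (e.symm z)).toReal • g (e.symm z) ∂μ.map e := by
        simp only [integral_map_equiv, e.symm_apply_apply]
    _ = ∫ z, ((μ.map e).rnDeriv μ z).toReal •
          (√((μ.map e.symm).rnDeriv μ (e.symm z)).toReal • g (e.symm z)) ∂μ :=
        (integral_rnDeriv_smul hac).symm
    _ = ∫ z, √((μ.map e).rnDeriv μ z).toReal • g (e.symm z) ∂μ := by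
        refine integral_congr_ae ?_
        filter_upwards [rnDeriv_map_symm_comp_symm e hca] with z hz
        rw [smul_smul, hz, Pi.inv_apply, ENNReal.toReal_mul_sqrt_toReal_inv]

end MeasureTheory.Measure

theorem Complex.exp_phase_mul_exp_phase_neg (h a b : ℝ) :
    Complex.exp (((-2 * Real.pi * a / h : ℝ) : ℂ) * Complex.I) *
        Complex.exp (((-2 * Real.pi * -b / h : ℝ) : ℂ) * Complex.I)
      = Complex.exp (((-2 * Real.pi * (a - b) / h : ℝ) : ℂ) * Complex.I) := by
  rw [← Complex.exp_add]
  push_cast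
  ring_nf

theorem rho_conj_intOp_general
    (μ : Measure M) [SigmaFinite μ]
    (hquasi : ∀ φ : M ≃ₘ⟮𝓡 d, 𝓡 d⟯ M,
      (∃ K : Set M, IsCompact K ∧ ∀ x ∉ K, φ x = x) →
        μ.map ⇑φ ≪ μ ∧ μ ≪ μ.map ⇑φ)
    (h : ℝ)
    (φ : M ≃ₘ⟮𝓡 d, 𝓡 d⟯ M) (hφ : ∃ K : Set M, IsCompact K ∧ ∀ x ∉ K, φ x = x)
    (f : M → ℝ)
    (K : M → M → ℂ)
    (ψ : M → ℂ) :
    rho h φ f μ (intOp μ K (rho h φ.symm (-(f ∘ ⇑φ)) μ ψ))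
      =ᵐ[μ]
    intOp μ (fun x y =>
      Complex.exp (((-2 * Real.pi * (f x - f y) / h : ℝ) : ℂ) * Complex.I) *
        ((Real.sqrt (((μ.map ⇑φ).rnDeriv μ) x).toReal : ℝ) : ℂ) *
        ((Real.sqrt (((μ.map ⇑φ).rnDeriv μ) y).toReal : ℝ) : ℂ) *
        K (φ.symm x) (φ.symm y)) ψ := by
  obtain ⟨hac, hca⟩ := hquasi φ hφ
  let e : M ≃ᵐ M := φ.toHomeomorph.toMeasurableEquiv
  refine Filter.Eventually.of_forall fun x => ?_
  have hinner : intOp μ K (rho h φ.symm (-(f ∘ φ)) μ ψ) (φ.symm x)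
      = ∫ z, (√((μ.map φ).rnDeriv μ z).toReal : ℂ) * (K (φ.symm x) (φ.symm z) *
          Complex.exp (((-2 * Real.pi * -f z / h : ℝ) : ℂ) * Complex.I) * ψ z) ∂μ := by
    have := Measure.integral_sqrt_rnDeriv_map_symm_smul e hac hca fun y =>
      K (φ.symm x) y * Complex.exp (((-2 * Real.pi * -f (φ y) / h : ℝ) : ℂ) * Complex.I) * ψ (φ y)
    have he : ⇑e = φ := rfl
    have he_symm : ⇑e.symm = φ.symm := rfl
    simp only [he, he_symm, φ.apply_symm_apply, Complex.real_smul] at this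
    rw [intOp, ← this]
    congr 1 with y
    have hsymm_symm : ⇑φ.symm.symm = φ := rfl
    simp only [rho, Pi.neg_apply, Function.comp_apply, hsymm_symm]
    ring
  rw [rho, hinner, intOp, ← integral_const_mul]
  congr 1 with z
  rw [← Complex.exp_phase_mul_exp_phase_neg]
  ring

/-- **Conjugation of integral operators by `ρ^h_{(φ,f)}`** :
`ρ^h_{(φ,f)} T_K (ρ^h_{(φ,f)})⁻¹ = T_{K'}` on `L²(M,μ)`, where
`K'(x,y) = e^{−2πi(f(x)−f(y))/h} D(x)^{1/2} D(y)^{1/2} K(φ⁻¹(x),φ⁻¹(y))` and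
`D = d(φ_*μ)/dμ`. -/
theorem rho_conj_intOp
    (μ : Measure M) [SigmaFinite μ]
    (hquasi : ∀ φ : M ≃ₘ⟮𝓡 d, 𝓡 d⟯ M,
      (∃ K : Set M, IsCompact K ∧ ∀ x ∉ K, φ x = x) →
        μ.map ⇑φ ≪ μ ∧ μ ≪ μ.map ⇑φ)
    (h : ℝ) (hh : h ∈ Set.Ioc (0 : ℝ) 1)
    (φ : M ≃ₘ⟮𝓡 d, 𝓡 d⟯ M) (hφ : ∃ K : Set M, IsCompact K ∧ ∀ x ∉ K, φ x = x)
    (f : M → ℝ) (hf : ContMDiff (𝓡 d) 𝓘(ℝ, ℝ) (⊤ : ℕ∞) f) (hfc : HasCompactSupport f)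
    (K : M → M → ℂ)
    (hKm : Measurable (Function.uncurry K))
    (hK2 : ∫⁻ p, (‖Function.uncurry K p‖₊ : ENNReal) ^ 2 ∂(μ.prod μ) < ⊤)
    (ψ : M → ℂ) (hψ : MemLp ψ 2 μ) :
    rho h φ f μ (intOp μ K (rho h φ.symm (-(f ∘ ⇑φ)) μ ψ))
      =ᵐ[μ]
    intOp μ (fun x y =>
      Complex.exp (((-2 * Real.pi * (f x - f y) / h : ℝ) : ℂ) * Complex.I) *
        ((Real.sqrt (((μ.map ⇑φ).rnDeriv μ) x).toReal : ℝ) : ℂ) *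
        ((Real.sqrt (((μ.map ⇑φ).rnDeriv μ) y).toReal : ℝ) : ℂ) *
        K (φ.symm x) (φ.symm y)) ψ :=
  rho_conj_intOp_general μ hquasi h φ hφ f K ψ
end
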